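/- Let λ > 0, Σ ∈ S^n_{+}, and L(S) := ⟨Σ,S⟩ - log(det S) + λ‖S‖₁ on S^n_{++}. For S ∈ S^n_{++} with ‖S‖₁ > K where K > n/λ, and any ε ∈ (0,1) with -n log(1-ε)/ε ≤ λK, one has L(S) - L((1-ε)S) ≥ ελ‖S‖₁ + n log(1-ε) > ελK + n log(1-ε) ≥ 0. -/

import Mathlib

/-! Shrinking `S` to `(1 - ε) S` scales the linear terms `⟨Σ,S⟩` and `λ‖S‖₁` by `1 - ε` while
`log det` drops by exactly `-n log(1 - ε)`; so `L(S) - L((1 - ε)S) = ε⟨Σ,S⟩ + ελ‖S‖₁ + n log(1 - ε)`,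
and `⟨Σ,S⟩ ≥ 0` because the trace of a product of positive semidefinite matrices is nonnegative. -/

open Matrix

/-- Trace inner product ⟨A,B⟩ = tr(Aᵀ B). -/
noncomputable def tInner {n : ℕ} (A B : Matrix (Fin n) (Fin n) ℝ) : ℝ :=
  Matrix.trace (Aᵀ * B)

/-- Entrywise 1-norm of a matrix. -/
noncomputable def norm1 {n : ℕ} (A : Matrix (Fin n) (Fin n) ℝ) : ℝ :=
  ∑ i, ∑ j, |A i j|

/-- The objective `L(S) = ⟨Σ,S⟩ - log det S + λ‖S‖₁`. -/
noncomputable def Lfun {n : ℕ} (lam : ℝ) (Sig S : Matrix (Fin n) (Fin n) ℝ) : ℝ :=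
  tInner Sig S - Real.log S.det + lam * norm1 S

open scoped ComplexOrder in
lemma Matrix.PosSemidef.trace_mul_nonneg {m 𝕜 : Type*} [Fintype m] [DecidableEq m] [RCLike 𝕜]
    {A B : Matrix m m 𝕜} (hA : A.PosSemidef) (hB : B.PosSemidef) : 0 ≤ (A * B).trace := by
  obtain ⟨C, rfl⟩ : ∃ C : Matrix m m 𝕜, A = Cᴴ * C := by
    open scoped MatrixOrder in exact CStarAlgebra.nonneg_iff_eq_star_mul_self.mp hA.nonneg
  rw [Matrix.mul_assoc, trace_mul_comm]
  exact (hB.mul_mul_conjTranspose_same C).trace_nonneg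

lemma tInner_nonneg {n : ℕ} {A B : Matrix (Fin n) (Fin n) ℝ} (hA : A.PosSemidef)
    (hB : B.PosSemidef) : 0 ≤ tInner A B := by
  rw [tInner, ← conjTranspose_eq_transpose_of_trivial, hA.isHermitian]
  exact hA.trace_mul_nonneg hB

lemma tInner_smul_right {n : ℕ} (A B : Matrix (Fin n) (Fin n) ℝ) (c : ℝ) :
    tInner A (c • B) = c * tInner A B := by
  simp only [tInner, Matrix.mul_smul, trace_smul, smul_eq_mul]

lemma norm1_smul {n : ℕ} (A : Matrix (Fin n) (Fin n) ℝ) (c : ℝ) :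
    norm1 (c • A) = |c| * norm1 A := by
  simp only [norm1, Matrix.smul_apply, smul_eq_mul, abs_mul, Finset.mul_sum]

lemma log_det_smul {n : ℕ} (S : Matrix (Fin n) (Fin n) ℝ) {c : ℝ} (hc : c ≠ 0)
    (hS : S.det ≠ 0) : Real.log (c • S).det = n * Real.log c + Real.log S.det := by
  rw [det_smul, Real.log_mul (pow_ne_zero _ hc) hS, Real.log_pow, Fintype.card_fin]

lemma Lfun_sub_Lfun_smul {n : ℕ} (lam ε : ℝ) (hε : ε < 1) (Sig S : Matrix (Fin n) (Fin n) ℝ)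
    (hS : S.det ≠ 0) :
    Lfun lam Sig S - Lfun lam Sig ((1 - ε) • S)
      = ε * tInner Sig S + ε * lam * norm1 S + n * Real.log (1 - ε) := by
  rw [Lfun, Lfun, tInner_smul_right, norm1_smul, abs_of_pos (sub_pos.mpr hε),
    log_det_smul S (sub_pos.mpr hε).ne' hS]
  ring

theorem stmt3_general {n : ℕ} (lam K ε : ℝ) (hlam : 0 < lam)
    (Sig : Matrix (Fin n) (Fin n) ℝ) (hSig : Sig.PosSemidef)
    (S : Matrix (Fin n) (Fin n) ℝ) (hS : S.PosDef) (hS1 : norm1 S > K)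
    (hε : ε ∈ Set.Ioo (0 : ℝ) 1)
    (hεK : -(n : ℝ) * Real.log (1 - ε) / ε ≤ lam * K) :
    Lfun lam Sig S - Lfun lam Sig ((1 - ε) • S)
        ≥ ε * lam * norm1 S + (n : ℝ) * Real.log (1 - ε) ∧
      ε * lam * norm1 S + (n : ℝ) * Real.log (1 - ε)
        > ε * lam * K + (n : ℝ) * Real.log (1 - ε) ∧
      ε * lam * K + (n : ℝ) * Real.log (1 - ε) ≥ 0 := by
  obtain ⟨hε0, hε1⟩ := hε
  have hfit : 0 ≤ ε * tInner Sig S := mul_nonneg hε0.le (tInner_nonneg hSig hS.posSemidef)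
  have hpen : ε * lam * K < ε * lam * norm1 S := mul_lt_mul_of_pos_left hS1 (by positivity)
  have hlog : -(n : ℝ) * Real.log (1 - ε) ≤ ε * lam * K := by
    rw [div_le_iff₀ hε0] at hεK
    linarith
  refine ⟨?_, by linarith, by linarith⟩
  rw [Lfun_sub_Lfun_smul lam ε hε1 Sig S hS.det_pos.ne']
  linarith

/-- For `S` positive definite with `‖S‖₁ > K`, `K > n/λ`, and `ε ∈ (0,1)` with
`-n log(1-ε)/ε ≤ λK`, one has
`L(S) - L((1-ε)S) ≥ ελ‖S‖₁ + n log(1-ε) > ελK + n log(1-ε) ≥ 0`. -/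
theorem stmt3 {n : ℕ} (lam K ε : ℝ) (hlam : 0 < lam)
    (Sig : Matrix (Fin n) (Fin n) ℝ) (hSig : Sig.PosSemidef)
    (hK : (n : ℝ) / lam < K)
    (S : Matrix (Fin n) (Fin n) ℝ) (hS : S.PosDef) (hS1 : norm1 S > K)
    (hε : ε ∈ Set.Ioo (0 : ℝ) 1)
    (hεK : -(n : ℝ) * Real.log (1 - ε) / ε ≤ lam * K) :
    Lfun lam Sig S - Lfun lam Sig ((1 - ε) • S)
        ≥ ε * lam * norm1 S + (n : ℝ) * Real.log (1 - ε) ∧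
      ε * lam * norm1 S + (n : ℝ) * Real.log (1 - ε)
        > ε * lam * K + (n : ℝ) * Real.log (1 - ε) ∧
      ε * lam * K + (n : ℝ) * Real.log (1 - ε) ≥ 0 :=
  stmt3_general lam K ε hlam Sig hSig S hS hS1 hε hεK
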